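/- For Rule 42, defined by its truth table with g(0,0,0)=0, g(0,0,1)=1, g(0,1,0)=0, g(0,1,1)=1, g(1,0,0)=0, g(1,0,1)=1, g(1,1,0)=0, g(1,1,1)=0 (arguments ordered as top, center, right), and any n ≥ 1, the triangular blocks b of size n+1 with gⁿ(b) = 1 are exactly: (i) blocks with b(n+1,1)=1 and b(n,2)=0, other cells arbitrary; or (ii) blocks with b(n+1,1)=1, b(n,2)=1, b(n,1)=0, other cells arbitrary. Consequently Pₙ(1) = ρ(1−ρ)(1+ρ) for all n. -/

import Mathlib

/-- The set of lattice positions of a triangular block of size `r`: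
pairs `(i,j)` with `i,j ≥ 1` and `i + j ≤ r + 1`. -/
def Tri (r : ℕ) : Finset (ℕ × ℕ) :=
  (Finset.range (r + 2) ×ˢ Finset.range (r + 2)).filter
    (fun p => 1 ≤ p.1 ∧ 1 ≤ p.2 ∧ p.1 + p.2 ≤ r + 1)

/-- A triangular block of size `r`: an assignment of values in `{0,1}` to the
positions of `Tri r`. -/
def TriBlock (r : ℕ) := {p // p ∈ Tri r} → Fin 2

instance (r : ℕ) : Fintype (TriBlock r) := by unfold TriBlock; infer_instance
instance (r : ℕ) : DecidableEq (TriBlock r) := by unfold TriBlock; infer_instance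

/-- Extend a triangular block to a total function on `ℕ × ℕ` (zero outside). -/
def ext {r : ℕ} (b : TriBlock r) : ℕ → ℕ → Fin 2 :=
  fun i j => if h : (i, j) ∈ Tri r then b ⟨(i, j), h⟩ else 0

/-- The value of block `b` at position `(i,j)` (zero outside the block). -/
def cell {r : ℕ} (b : TriBlock r) (i j : ℕ) : Fin 2 := ext b i j

/-- One application of the local rule `g` (arguments: top, center, right)
at every site: `c(i,j) = g(b(i,j+1), b(i,j), b(i+1,j))`. -/
def step (g : Fin 2 → Fin 2 → Fin 2 → Fin 2) (s : ℕ → ℕ → Fin 2) : ℕ → ℕ → Fin 2 :=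
  fun i j => g (s i (j + 1)) (s i j) (s (i + 1) j)

/-- Restrict a total function to a triangular block of size `r`. -/
def contract (r : ℕ) (s : ℕ → ℕ → Fin 2) : TriBlock r := fun q => s q.1.1 q.1.2

/-- The block evolution operator: maps a block of size `m` (intended `m = r+1`)
to a block of size `r` via `c(i,j) = g(b(i,j+1), b(i,j), b(i+1,j))`. -/
def evolve (g : Fin 2 → Fin 2 → Fin 2 → Fin 2) {m : ℕ} (r : ℕ) (b : TriBlock m) :
    TriBlock r := contract r (step g (ext b))

/-- The `n`-fold iterate of the block evolution operator, from blocks of size `m`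
(intended `m = r + n`) to blocks of size `r`. -/
def evolveN (g : Fin 2 → Fin 2 → Fin 2 → Fin 2) (n : ℕ) {m : ℕ} (r : ℕ)
    (b : TriBlock m) : TriBlock r := contract r ((step g)^[n] (ext b))

/-- The single-cell block consisting of a `1`. -/
def oneBlock : TriBlock 1 := fun _ => 1

/-- Number of cells in state 1 in a block. -/
def numOnes {r : ℕ} (b : TriBlock r) : ℕ :=
  (@Finset.filter _ (fun x => b x = 1) (fun x => instDecidableEqFin 2 (b x) 1) Finset.univ).card

/-- Number of cells in state 0 in a block. -/
def numZeros {r : ℕ} (b : TriBlock r) : ℕ :=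
  (@Finset.filter _ (fun x => b x = 0) (fun x => instDecidableEqFin 2 (b x) 0) Finset.univ).card

/-- The set of `n`-step preimages of the single-cell block `1`:
blocks of size `n + 1` mapped by `n` iterations of the block evolution
operator of `g` to the single cell `1`. -/
def preimages (g : Fin 2 → Fin 2 → Fin 2 → Fin 2) (n : ℕ) :
    Finset (TriBlock (n + 1)) :=
  Finset.univ.filter (fun b => evolveN g n 1 b = oneBlock)

/-- `Pₙ(1)`: the density of ones after `n` iterations, starting from a
Bernoulli-`ρ` initial measure, computed by summing the probabilities of all
`n`-step preimages of the single cell `1`. -/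
noncomputable def Pn (g : Fin 2 → Fin 2 → Fin 2 → Fin 2) (n : ℕ) (ρ : ℝ) : ℝ :=
  ∑ a ∈ preimages g n, ρ ^ numOnes a * (1 - ρ) ^ numZeros a


/-- Rule 42, given by its truth table with arguments (top, center, right):
output 1 exactly on (0,0,1), (0,1,1) and (1,0,1). -/
def g42 : Fin 2 → Fin 2 → Fin 2 → Fin 2 := fun x y z =>
  if (x = 0 ∧ y = 0 ∧ z = 1) ∨ (x = 0 ∧ y = 1 ∧ z = 1) ∨ (x = 1 ∧ y = 0 ∧ z = 1)
    then 1 else 0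

/-!
Rule 42 outputs `1` only if its right argument is `1`, and `g42 1 1 _ = 0`. Hence after one step
no site sees the neighborhood `(1, 1, 1)`, and on such configurations Rule 42 is the shift
`i ↦ i + 1`. So `n` steps read at `(1, 1)` are one step read at `(n, 1)`, namely
`g42 (b(n,2)) (b(n,1)) (b(n+1,1))`, which is `1` exactly on the two listed patterns. These are
disjoint cylinders of Bernoulli weights `ρ(1-ρ)` and `ρ²(1-ρ)`.
-/

lemma mem_Tri {r i j : ℕ} : (i, j) ∈ Tri r ↔ 1 ≤ i ∧ 1 ≤ j ∧ i + j ≤ r + 1 := by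
  simp only [Tri, Finset.mem_filter, Finset.mem_product, Finset.mem_range]
  omega

lemma cell_of_mem {r i j : ℕ} (b : TriBlock r) (h : (i, j) ∈ Tri r) :
    cell b i j = b ⟨(i, j), h⟩ :=
  dif_pos h

lemma contract_one_eq_oneBlock_iff (s : ℕ → ℕ → Fin 2) :
    contract 1 s = oneBlock ↔ s 1 1 = 1 := by
  refine ⟨fun h => congrFun h ⟨(1, 1), mem_Tri.2 (by omega)⟩, fun h => ?_⟩
  funext ⟨⟨i, j⟩, hij⟩
  obtain ⟨rfl, rfl⟩ : i = 1 ∧ j = 1 := by have := mem_Tri.1 hij; omega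
  exact h

lemma g42_eq_one_iff (x y z : Fin 2) :
    g42 x y z = 1 ↔ (z = 1 ∧ x = 0) ∨ (z = 1 ∧ x = 1 ∧ y = 0) := by
  revert x y z; decide

lemma g42_one_one (z : Fin 2) : g42 1 1 z = 0 := by
  revert z; decide

lemma g42_eq_right (x y z : Fin 2) (h : ¬(x = 1 ∧ y = 1 ∧ z = 1)) : g42 x y z = z := by
  revert x y z; decide

def NoFullNeighborhood (s : ℕ → ℕ → Fin 2) : Prop :=
  ∀ i j, s i (j + 1) = 1 → s i j = 1 → s (i + 1) j = 0

lemma noFullNeighborhood_step (s : ℕ → ℕ → Fin 2) : NoFullNeighborhood (step g42 s) := by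
  intro i j htop hcenter
  have hright₁ : s (i + 1) (j + 1) = 1 := ((g42_eq_one_iff _ _ _).1 htop).elim And.left And.left
  have hright₂ : s (i + 1) j = 1 := ((g42_eq_one_iff _ _ _).1 hcenter).elim And.left And.left
  show g42 (s (i + 1) (j + 1)) (s (i + 1) j) _ = 0
  rw [hright₁, hright₂, g42_one_one]

lemma step_g42_eq_shift {s : ℕ → ℕ → Fin 2} (hs : NoFullNeighborhood s) (i j : ℕ) :
    step g42 s i j = s (i + 1) j := by
  refine g42_eq_right _ _ _ fun ⟨htop, hcenter, hright⟩ => ?_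
  exact absurd (hright.symm.trans (hs i j htop hcenter)) (by decide)

lemma iterate_succ_step_g42 (s : ℕ → ℕ → Fin 2) (m i j : ℕ) :
    (step g42)^[m + 1] s i j = step g42 s (m + i) j := by
  induction m generalizing i with
  | zero => simp
  | succ m ih =>
    rw [Function.iterate_succ_apply', step_g42_eq_shift, ih, Nat.add_right_comm, Nat.add_assoc]
    rw [Function.iterate_succ_apply']
    exact noFullNeighborhood_step _

theorem evolveN_g42_eq_oneBlock_iff (k : ℕ) (b : TriBlock (k + 1 + 1)) :
    evolveN g42 (k + 1) 1 b = oneBlock ↔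
      ((cell b (k + 1 + 1) 1 = 1 ∧ cell b (k + 1) 2 = 0) ∨
        (cell b (k + 1 + 1) 1 = 1 ∧ cell b (k + 1) 2 = 1 ∧ cell b (k + 1) 1 = 0)) := by
  rw [evolveN, contract_one_eq_oneBlock_iff, iterate_succ_step_g42]
  exact g42_eq_one_iff _ _ _

def bernoulliWeight (ρ : ℝ) : Fin 2 → ℝ := ![1 - ρ, ρ]

lemma pow_numOnes_mul_pow_numZeros {r : ℕ} (ρ : ℝ) (b : TriBlock r) :
    ρ ^ numOnes b * (1 - ρ) ^ numZeros b = ∏ x, bernoulliWeight ρ (b x) := by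
  rw [← Finset.prod_fiberwise' Finset.univ b, Fin.prod_univ_two, Finset.prod_const,
    Finset.prod_const, mul_comm]
  rfl

lemma sum_prod_filter_eq_prod {α β R : Type*} [Fintype α] [DecidableEq α] [Fintype β]
    [DecidableEq β] [CommSemiring R] (w : β → R) (hw : ∑ v, w v = 1) (E : Finset α)
    (val : α → β) :
    ∑ f ∈ Finset.univ.filter (fun f : α → β => ∀ x ∈ E, f x = val x), ∏ x, w (f x) =
      ∏ x ∈ E, w (val x) := by
  have hcyl : Finset.univ.filter (fun f : α → β => ∀ x ∈ E, f x = val x) =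
      Fintype.piFinset fun x => if x ∈ E then {val x} else Finset.univ := by
    ext f
    simp only [Finset.mem_filter, Finset.mem_univ, true_and, Fintype.mem_piFinset]
    refine forall_congr' fun x => ?_
    split_ifs <;> simp [*]
  rw [hcyl, ← Finset.prod_univ_sum]
  calc ∏ x, ∑ v ∈ (if x ∈ E then {val x} else Finset.univ), w v
      = ∏ x, if x ∈ E then w (val x) else 1 :=
        Finset.prod_congr rfl fun x _ => by split_ifs <;> simp [hw]
    _ = ∏ x ∈ E, w (val x) := by rw [Finset.prod_ite_mem, Finset.univ_inter]

lemma sum_prod_bernoulliWeight_filter {α : Type*} [Fintype α] [DecidableEq α] (ρ : ℝ)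
    {p q s : α} (hpq : p ≠ q) (hps : p ≠ s) (hqs : q ≠ s) :
    ∑ f ∈ Finset.univ.filter (fun f : α → Fin 2 =>
        (f p = 1 ∧ f q = 0) ∨ (f p = 1 ∧ f q = 1 ∧ f s = 0)), ∏ x, bernoulliWeight ρ (f x) =
      ρ * (1 - ρ) * (1 + ρ) := by
  have hw : ∑ v, bernoulliWeight ρ v = 1 := by simp [bernoulliWeight]
  have hdisj : Disjoint (Finset.univ.filter fun f : α → Fin 2 => f p = 1 ∧ f q = 0)
      (Finset.univ.filter fun f : α → Fin 2 => f p = 1 ∧ f q = 1 ∧ f s = 0) := by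
    refine Finset.disjoint_filter.2 fun f _ h₁ h₂ => ?_
    exact absurd (h₁.2.symm.trans h₂.2.1) (by decide)
  have hcyl₁ : (Finset.univ.filter fun f : α → Fin 2 => f p = 1 ∧ f q = 0) =
      Finset.univ.filter fun f => ∀ x ∈ ({p, q} : Finset α), f x = if x = q then 0 else 1 :=
    Finset.filter_congr fun f _ => by simp [hpq]
  have hcyl₂ : (Finset.univ.filter fun f : α → Fin 2 => f p = 1 ∧ f q = 1 ∧ f s = 0) =
      Finset.univ.filter fun f => ∀ x ∈ ({p, q, s} : Finset α), f x = if x = s then 0 else 1 :=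
    Finset.filter_congr fun f _ => by simp [hps, hqs]
  rw [Finset.filter_or, Finset.sum_union hdisj, hcyl₁, hcyl₂, sum_prod_filter_eq_prod _ hw,
    sum_prod_filter_eq_prod _ hw]
  simp only [Finset.prod_insert, Finset.prod_singleton, Finset.mem_insert, Finset.mem_singleton,
    hpq, hps, hqs, or_self, not_false_eq_true, ↓reduceIte, bernoulliWeight, Matrix.cons_val_zero,
    Matrix.cons_val_one, Matrix.cons_val_fin_one]
  ring

theorem Pn_g42_succ (k : ℕ) (ρ : ℝ) : Pn g42 (k + 1) ρ = ρ * (1 - ρ) * (1 + ρ) := by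
  have hp : (k + 1 + 1, 1) ∈ Tri (k + 1 + 1) := mem_Tri.2 (by omega)
  have hq : (k + 1, 2) ∈ Tri (k + 1 + 1) := mem_Tri.2 (by omega)
  have hs : (k + 1, 1) ∈ Tri (k + 1 + 1) := mem_Tri.2 (by omega)
  have hpre : preimages g42 (k + 1) = Finset.univ.filter fun b : TriBlock (k + 1 + 1) =>
      (b ⟨_, hp⟩ = 1 ∧ b ⟨_, hq⟩ = 0) ∨ (b ⟨_, hp⟩ = 1 ∧ b ⟨_, hq⟩ = 1 ∧ b ⟨_, hs⟩ = 0) :=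
    Finset.filter_congr fun b _ => by
      rw [evolveN_g42_eq_oneBlock_iff, cell_of_mem b hp, cell_of_mem b hq, cell_of_mem b hs]
  rw [Pn, hpre, Finset.sum_congr rfl fun b _ => pow_numOnes_mul_pow_numZeros ρ b]
  exact sum_prod_bernoulliWeight_filter ρ (by simp) (by simp) (by simp)

theorem stmt3_general (n : ℕ) (hn : 1 ≤ n) (ρ : ℝ) :
    (∀ b : TriBlock (n + 1),
        evolveN g42 n 1 b = oneBlock ↔
          ((cell b (n + 1) 1 = 1 ∧ cell b n 2 = 0) ∨
            (cell b (n + 1) 1 = 1 ∧ cell b n 2 = 1 ∧ cell b n 1 = 0))) ∧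
      Pn g42 n ρ = ρ * (1 - ρ) * (1 + ρ) := by
  obtain ⟨k, rfl⟩ := Nat.exists_eq_add_of_le' hn
  exact ⟨evolveN_g42_eq_oneBlock_iff k, Pn_g42_succ k ρ⟩

/-- for Rule 42 and `n ≥ 1`, the `n`-step preimages of the single
cell `1` are exactly: (i) blocks with `b(n+1,1)=1`, `b(n,2)=0`; or (ii) blocks
with `b(n+1,1)=1`, `b(n,2)=1`, `b(n,1)=0`; other cells arbitrary. Consequently
`Pₙ(1) = ρ(1−ρ)(1+ρ)` for all such `n`. -/
theorem stmt3 (n : ℕ) (hn : 1 ≤ n) (ρ : ℝ) (hρ : ρ ∈ Set.Icc (0 : ℝ) 1) :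
    (∀ b : TriBlock (n + 1),
        evolveN g42 n 1 b = oneBlock ↔
          ((cell b (n + 1) 1 = 1 ∧ cell b n 2 = 0) ∨
            (cell b (n + 1) 1 = 1 ∧ cell b n 2 = 1 ∧ cell b n 1 = 0))) ∧
      Pn g42 n ρ = ρ * (1 - ρ) * (1 + ρ) :=
  stmt3_general n hn ρ
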